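/- Let G = (V, E) be a connected multigraph, f a divisor on G, and M a positive integer with M > dist_rec_G(f) + max{0, max_{v ∈ V}(f(v) − d_G(v))}; let G' and f' be as in the apex construction. Then M > dist_nonhalt_{G'}(f'). -/

import Mathlib

variable {V : Type*} [Fintype V] [DecidableEq V]

/-- The degree of vertex `v` in the multigraph with edge-multiplicity function `m`. -/
def mgDeg (m : V → V → ℕ) (v : V) : ℕ := ∑ u, m v u

/-- The divisor obtained from `f` by firing vertex `v`. -/
def mgFire (m : V → V → ℕ) (f : V → ℤ) (v : V) : V → ℤ :=
  fun u => if u = v then f v - mgDeg m v else f u + m v u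

/-- The divisor obtained from `f` by firing the vertices of `L` in order. -/
def mgPlay (m : V → V → ℕ) (f : V → ℤ) (L : List V) : V → ℤ :=
  L.foldl (mgFire m) f

/-- `L` is a legal game from `f`: each fired vertex is active when fired. -/
def mgLegal (m : V → V → ℕ) : (V → ℤ) → List V → Prop
  | _, [] => True
  | f, v :: L => ((mgDeg m v : ℤ) ≤ f v) ∧ mgLegal m (mgFire m f v) L

/-- A divisor is stable if no vertex is active. -/
def mgStable (m : V → V → ℕ) (f : V → ℤ) : Prop := ∀ v, f v < (mgDeg m v : ℤ)

/-- A divisor is halting if some legal game from it ends at a stable divisor. -/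
def mgHalting (m : V → V → ℕ) (f : V → ℤ) : Prop :=
  ∃ L : List V, mgLegal m f L ∧ mgStable m (mgPlay m f L)

/-- A divisor is recurrent if some non-empty legal game from it leads back to it. -/
def mgRecurrent (m : V → V → ℕ) (f : V → ℤ) : Prop :=
  ∃ L : List V, L ≠ [] ∧ mgLegal m f L ∧ mgPlay m f L = f

/-- A divisor is effective if it is nonnegative everywhere. -/
def mgEffective (f : V → ℤ) : Prop := ∀ v, 0 ≤ f v

/-- The degree of a divisor. -/
def mgDegDiv (f : V → ℤ) : ℤ := ∑ v, f v

/-- Distance of a divisor from a recurrent state. -/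
noncomputable def mgDistRec (m : V → V → ℕ) (f : V → ℤ) : ℕ :=
  sInf {n : ℕ | ∃ g : V → ℤ, mgEffective g ∧ mgDegDiv g = (n : ℤ) ∧ mgRecurrent m (f + g)}

/-- Distance of a divisor from a non-halting state. -/
noncomputable def mgDistNonhalt (m : V → V → ℕ) (f : V → ℤ) : ℕ :=
  sInf {n : ℕ | ∃ g : V → ℤ, mgEffective g ∧ mgDegDiv g = (n : ℤ) ∧ ¬ mgHalting m (f + g)}

/-- A multigraph is connected if any two vertices are joined by a path of
positive-multiplicity edges. -/
def mgConnected (m : V → V → ℕ) : Prop :=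
  ∀ u v : V, Relation.ReflTransGen (fun a b => 0 < m a b) u v

/-- `f` and `g` are linearly equivalent: `f` can be transformed to `g` by firings. -/
def mgLinEquiv (m : V → V → ℕ) (f g : V → ℤ) : Prop :=
  ∃ L : List V, mgPlay m f L = g

/-- A divisor is winnable if it is linearly equivalent to an effective divisor. -/
def mgWinnable (m : V → V → ℕ) (f : V → ℤ) : Prop :=
  ∃ g : V → ℤ, mgEffective g ∧ mgLinEquiv m f g

/-- The rank of a divisor. -/
noncomputable def mgRank (m : V → V → ℕ) (f : V → ℤ) : ℤ :=
  ((sInf {n : ℕ | ∃ g : V → ℤ, mgEffective g ∧ mgDegDiv g = (n : ℤ) ∧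
    ¬ mgWinnable m (f - g)} : ℕ) : ℤ) - 1

/-- Edge multiplicities of the apex construction: the edges of `G` (on the `some`
vertices) together with `M` parallel edges between the new vertex `none` and each
original vertex. -/
def apexM (m : V → V → ℕ) (M : ℕ) : Option V → Option V → ℕ
  | some u, some v => m u v
  | some _, none => M
  | none, some _ => M
  | none, none => 0

/-- The divisor `f\'` of the apex construction: `f\'(v) = f(v) + M` on original
vertices and `f\'(v_new) = 0`. -/
def apexF (f : V → ℤ) (M : ℕ) : Option V → ℤ
  | some v => f v + M
  | none => 0

/-!
Pick `g ≥ 0` of degree `dist_rec(f) < M` with `f + g` recurrent; it suffices that `f' + g`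
(extended by `0` at the apex) is recurrent on `G'`, because recurrent divisors are non-halting:
a legal firing from a recurrent divisor leads to a recurrent one (move the first firing of that
vertex in the cycle to the front), and a recurrent divisor is never stable.

On a connected graph the firing counts of a cycle form a harmonic function, hence are constant.
Firing every vertex once, in the order of its last firing in the cycle, is then legal. In `G'`
the extra `M` chips on each original vertex pay for its `M` edges to the apex, so this round stays
legal; afterwards the apex holds `M·|V|` chips, fires, and closes the cycle.
-/

lemma List.exists_eq_append_cons_dedup_eq {α : Type*} [DecidableEq α] {C P Q : List α} {v : α}
    (h : C.dedup = P ++ v :: Q) : ∃ A B, C = A ++ v :: B ∧ B.dedup = Q := by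
  induction C generalizing P with
  | nil => simp at h
  | cons c C ih =>
    by_cases hc : c ∈ C
    · rw [List.dedup_cons_of_mem hc] at h
      obtain ⟨A, B, rfl, hB⟩ := ih h
      exact ⟨c :: A, B, rfl, hB⟩
    · rw [List.dedup_cons_of_notMem hc] at h
      cases P with
      | nil =>
        obtain ⟨rfl, hQ⟩ := List.cons_eq_cons.1 h
        exact ⟨[], C, rfl, hQ⟩
      | cons p P =>
        obtain ⟨A, B, rfl, hB⟩ := ih (List.cons_eq_cons.1 h).2
        exact ⟨c :: A, B, rfl, hB⟩

lemma mgFire_apply_of_ne (m : V → V → ℕ) (f : V → ℤ) {u v : V} (h : u ≠ v) :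
    mgFire m f v u = f u + m v u :=
  if_neg h

lemma mgFire_comm (m : V → V → ℕ) (f : V → ℤ) (a b : V) :
    mgFire m (mgFire m f a) b = mgFire m (mgFire m f b) a := by
  funext u
  unfold mgFire
  by_cases hab : a = b
  · rw [hab]
  · by_cases ha : u = a <;> by_cases hb : u = b <;> simp_all [Ne.symm hab] <;> ring

lemma mgPlay_cons (m : V → V → ℕ) (f : V → ℤ) (v : V) (L : List V) :
    mgPlay m f (v :: L) = mgPlay m (mgFire m f v) L :=
  rfl

lemma mgPlay_append (m : V → V → ℕ) (f : V → ℤ) (A B : List V) :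
    mgPlay m f (A ++ B) = mgPlay m (mgPlay m f A) B :=
  List.foldl_append

lemma mgPlay_perm (m : V → V → ℕ) (f : V → ℤ) {L L' : List V} (h : L.Perm L') :
    mgPlay m f L = mgPlay m f L' :=
  haveI : RightCommutative (mgFire m) := ⟨mgFire_comm m⟩
  h.foldl_eq f

lemma mgPlay_apply {m : V → V → ℕ} (hloop : ∀ v, m v v = 0) (f : V → ℤ) (L : List V)
    (u : V) :
    mgPlay m f L u = f u + ∑ v, (L.count v : ℤ) * m v u - L.count u * mgDeg m u := by
  induction L generalizing f with
  | nil => simp [mgPlay]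
  | cons a L ih =>
    have hfire : mgFire m f a u = f u + m a u - (if a = u then 1 else 0) * mgDeg m u := by
      by_cases h : a = u
      · subst h; simp [mgFire, hloop]
      · simp [mgFire_apply_of_ne m f (Ne.symm h), h]
    simp only [mgPlay_cons, ih, hfire, List.count_cons, beq_iff_eq]
    push_cast
    simp only [add_mul, Finset.sum_add_distrib, ite_mul, one_mul, zero_mul,
      Finset.sum_ite_eq, Finset.mem_univ, if_true]
    ring

lemma le_mgPlay_apply_of_notMem {m : V → V → ℕ} {f : V → ℤ} {L : List V} {v : V}
    (hv : v ∉ L) :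
    f v ≤ mgPlay m f L v := by
  induction L generalizing f with
  | nil => exact le_rfl
  | cons a L ih =>
    obtain ⟨hva, hvL⟩ := List.ne_and_not_mem_of_not_mem_cons hv
    calc f v ≤ mgFire m f a v := by rw [mgFire_apply_of_ne m f hva]; omega
      _ ≤ mgPlay m (mgFire m f a) L v := ih hvL

omit [DecidableEq V] in
lemma mgDeg_eq_sum_left {m : V → V → ℕ} (hsymm : ∀ u v, m u v = m v u) (v : V) :
    (mgDeg m v : ℤ) = ∑ u, (m u v : ℤ) := by
  simp only [mgDeg, Nat.cast_sum, hsymm v]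

lemma mgLegal_cons {m : V → V → ℕ} {f : V → ℤ} {v : V} {L : List V} :
    mgLegal m f (v :: L) ↔ (mgDeg m v : ℤ) ≤ f v ∧ mgLegal m (mgFire m f v) L :=
  Iff.rfl

lemma mgLegal_append (m : V → V → ℕ) (f : V → ℤ) (A B : List V) :
    mgLegal m f (A ++ B) ↔ mgLegal m f A ∧ mgLegal m (mgPlay m f A) B := by
  induction A generalizing f with
  | nil => simp [mgLegal, mgPlay]
  | cons a A ih => simp only [List.cons_append, mgLegal, ih, mgPlay_cons, and_assoc]

lemma mgLegal_iff_forall_eq_append_cons {m : V → V → ℕ} {f : V → ℤ} {L : List V} :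
    mgLegal m f L ↔ ∀ P v Q, L = P ++ v :: Q → (mgDeg m v : ℤ) ≤ mgPlay m f P v := by
  refine ⟨fun h P v Q hL => (mgLegal_cons.1 ((mgLegal_append m f P _).1 (hL ▸ h)).2).1,
    fun h => ?_⟩
  induction L generalizing f with
  | nil => trivial
  | cons a L ih =>
    exact ⟨h [] a L rfl, ih fun P v Q hL => h (a :: P) v Q (by rw [hL]; rfl)⟩

lemma mgLegal.mono {m : V → V → ℕ} {f g : V → ℤ} {L : List V} (hL : mgLegal m f L)
    (hfg : ∀ u ∈ L, f u ≤ g u) :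
    mgLegal m g L := by
  induction L generalizing f g with
  | nil => trivial
  | cons a L ih =>
    refine ⟨hL.1.trans (hfg a List.mem_cons_self), ih hL.2 fun u hu => ?_⟩
    have := hfg u (List.mem_cons_of_mem a hu)
    have := hfg a List.mem_cons_self
    simp only [mgFire]
    split_ifs <;> omega

lemma mgLegal.cons_erase {m : V → V → ℕ} {f : V → ℤ} {L : List V} {v : V}
    (hL : mgLegal m f L) (hv : (mgDeg m v : ℤ) ≤ f v) :
    mgLegal m f (v :: L.erase v) := by
  induction L generalizing f with
  | nil => exact ⟨hv, trivial⟩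
  | cons a L ih =>
    by_cases hav : a = v
    · subst hav
      simpa using hL
    · rw [List.erase_cons_tail (by simpa using hav)]
      have hv' : (mgDeg m v : ℤ) ≤ mgFire m f a v := by
        rw [mgFire_apply_of_ne m f (Ne.symm hav)]; omega
      have ha' : (mgDeg m a : ℤ) ≤ mgFire m f v a := by
        rw [mgFire_apply_of_ne m f hav]; linarith [hL.1]
      exact ⟨hv, ha', mgFire_comm m f v a ▸ (ih hL.2 hv').2⟩

section Recurrence

variable {m : V → V → ℕ} {f : V → ℤ}

lemma mgRecurrent.fire {v : V} (hf : mgRecurrent m f) (hv : (mgDeg m v : ℤ) ≤ f v) :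
    mgRecurrent m (mgFire m f v) := by
  obtain ⟨C, hne, hC, hplay⟩ := hf
  have hC' := (hC.cons_erase hv).2
  by_cases hvC : v ∈ C
  · have hback : mgPlay m (mgFire m f v) (C.erase v) = f := by
      rw [← mgPlay_cons, ← mgPlay_perm m f (List.perm_cons_erase hvC), hplay]
    refine ⟨C.erase v ++ [v], by simp, ?_, ?_⟩
    · rw [mgLegal_append, hback]
      exact ⟨hC', hv, trivial⟩
    · rw [mgPlay_append, hback]
      rfl
  · rw [List.erase_of_not_mem hvC] at hC'
    refine ⟨C, hne, hC', ?_⟩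
    rw [← mgPlay_cons, ← mgPlay_perm m f (List.perm_append_singleton v C), mgPlay_append, hplay]
    rfl

lemma mgRecurrent.play {L : List V} (hf : mgRecurrent m f) (hL : mgLegal m f L) :
    mgRecurrent m (mgPlay m f L) := by
  induction L generalizing f with
  | nil => exact hf
  | cons v L ih => exact ih (hf.fire hL.1) hL.2

lemma mgRecurrent.not_mgStable (hf : mgRecurrent m f) : ¬ mgStable m f := by
  obtain ⟨_ | ⟨v, C⟩, hne, hC, -⟩ := hf
  · exact absurd rfl hne
  · exact fun hs => (hs v).not_ge hC.1

lemma mgRecurrent.not_mgHalting (hf : mgRecurrent m f) : ¬ mgHalting m f :=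
  fun ⟨_, hL, hs⟩ => (hf.play hL).not_mgStable hs

lemma mgPlay_eq_self_of_count_eq_one (hsymm : ∀ u v, m u v = m v u) (hloop : ∀ v, m v v = 0)
    {L : List V} (hL : ∀ v, L.count v = 1) : mgPlay m f L = f := by
  funext u
  simp [mgPlay_apply hloop, hL, mgDeg_eq_sum_left hsymm]

lemma mgRecurrent_of_forall_mgDeg_le [Nonempty V] (hsymm : ∀ u v, m u v = m v u)
    (hloop : ∀ v, m v v = 0) (hf : ∀ v, (mgDeg m v : ℤ) ≤ f v) : mgRecurrent m f := by
  have hR : ∀ v, (Finset.univ : Finset V).toList.count v = 1 := fun v =>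
    List.count_eq_one_of_mem (Finset.nodup_toList _) (Finset.mem_toList.2 (Finset.mem_univ v))
  refine ⟨_, List.ne_nil_of_mem (Finset.mem_toList.2 (Finset.mem_univ (Classical.arbitrary V))),
    mgLegal_iff_forall_eq_append_cons.2 fun P v Q hPQ => ?_,
    mgPlay_eq_self_of_count_eq_one hsymm hloop hR⟩
  have hvP : v ∉ P := fun hv =>
    List.disjoint_of_nodup_append (hPQ ▸ Finset.nodup_toList _) hv List.mem_cons_self
  exact (hf v).trans (le_mgPlay_apply_of_notMem hvP)

end Recurrence

section Rounds

variable {m : V → V → ℕ} {f : V → ℤ}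

/-- For loopless `m`, firing every vertex `v` exactly `σ v` times leaves any divisor unchanged. -/
def mgHarmonic (m : V → V → ℕ) (σ : V → ℤ) : Prop :=
  ∀ u, ∑ v, σ v * m v u = σ u * mgDeg m u

lemma mgHarmonic_count_of_mgPlay_eq (hloop : ∀ v, m v v = 0) {C : List V}
    (hC : mgPlay m f C = f) : mgHarmonic m fun v => (C.count v : ℤ) := by
  intro u
  have := mgPlay_apply hloop f C u
  rw [hC] at this
  linarith

omit [DecidableEq V] in
lemma mgHarmonic.eq (hsymm : ∀ u v, m u v = m v u) (hconn : mgConnected m) {σ : V → ℤ}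
    (hσ : mgHarmonic m σ) (u w : V) : σ u = σ w := by
  obtain ⟨x, -, hx⟩ := Finset.exists_max_image Finset.univ σ ⟨u, Finset.mem_univ u⟩
  -- maximum principle: a maximum of `σ` propagates to every neighbour
  have hstep : ∀ b y, (∀ a, σ a ≤ σ b) → 0 < m b y → σ y = σ b := by
    intro b y hb hby
    have hle : ∀ v ∈ Finset.univ, σ v * m v b ≤ σ b * m v b := fun v _ =>
      mul_le_mul_of_nonneg_right (hb v) (Int.natCast_nonneg _)
    have hsum : ∑ v, σ v * m v b = ∑ v, σ b * m v b := by
      rw [hσ b, ← Finset.mul_sum, mgDeg_eq_sum_left hsymm]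
    have hyb : (0 : ℤ) < m y b := by exact_mod_cast hsymm b y ▸ hby
    exact mul_right_cancel₀ hyb.ne'
      ((Finset.sum_eq_sum_iff_of_le hle).1 hsum y (Finset.mem_univ y))
  have hall : ∀ y, σ y = σ x := fun y => by
    induction hconn x y with
    | refl => rfl
    | tail _ hby ih => exact (hstep _ _ (fun a => ih ▸ hx a (Finset.mem_univ a)) hby).trans ih
  rw [hall u, hall w]

/-- If a legal game fires every vertex equally often, then firing each vertex once, in the order
of its last firing in the game, is legal. -/
lemma mgLegal.dedup (hsymm : ∀ u v, m u v = m v u) (hloop : ∀ v, m v v = 0) {C : List V}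
    {k : ℕ} (hC : mgLegal m f C) (hk : ∀ v, C.count v = k) : mgLegal m f C.dedup := by
  rw [mgLegal_iff_forall_eq_append_cons]
  intro P v Q hR
  have hnd : (P ++ v :: Q).Nodup := hR ▸ C.nodup_dedup
  obtain ⟨A, B, rfl, hB⟩ := List.exists_eq_append_cons_dedup_eq hR
  have hvP : v ∉ P := fun hv => List.disjoint_of_nodup_append hnd hv List.mem_cons_self
  have hvB : v ∉ B := by
    rw [← List.mem_dedup, hB]
    exact (List.nodup_cons.1 hnd.of_append_right).1
  have hcount : ∀ u, (A.count u : ℤ) + (v :: B).count u = k := fun u => by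
    rw [← hk u, List.count_append]; push_cast; rfl
  have hAv : (A.count v : ℤ) = k - 1 := by
    have := hcount v
    rw [List.count_cons_self, List.count_eq_zero_of_not_mem hvB] at this
    push_cast at this
    linarith
  have hAu : ∀ u, (A.count u : ℤ) ≤ k - 1 + P.count u := by
    intro u
    have hu := hcount u
    by_cases huP : u ∈ P
    · have := List.count_pos_iff.2 huP
      have : (0 : ℤ) ≤ (v :: B).count u := Int.natCast_nonneg _
      omega
    · have huC : 0 < (A ++ v :: B).count u := by
        rw [hk u, ← hk v, List.count_append, List.count_cons_self]; omega
      have huB : u ∈ v :: B := by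
        have := List.mem_dedup.2 (List.count_pos_iff.1 huC)
        rw [hR, ← hB] at this
        simpa [huP, List.mem_dedup] using this
      have := List.count_pos_iff.2 huB
      omega
  have hsum : ∑ u, (A.count u : ℤ) * m u v ≤
      (k - 1) * mgDeg m v + ∑ u, (P.count u : ℤ) * m u v := by
    rw [mgDeg_eq_sum_left hsymm, Finset.mul_sum, ← Finset.sum_add_distrib]
    gcongr with u
    rw [← add_mul]
    exact mul_le_mul_of_nonneg_right (hAu u) (Int.natCast_nonneg _)
  have hact := mgLegal_iff_forall_eq_append_cons.1 hC A v B rfl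
  rw [mgPlay_apply hloop, hAv] at hact
  rw [mgPlay_apply hloop, List.count_eq_zero_of_not_mem hvP]
  push_cast
  linarith

lemma mgRecurrent.exists_mgLegal_round (hsymm : ∀ u v, m u v = m v u) (hloop : ∀ v, m v v = 0)
    (hconn : mgConnected m) (hf : mgRecurrent m f) :
    ∃ R : List V, (∀ v, R.count v = 1) ∧ mgLegal m f R := by
  obtain ⟨C, hne, hC, hplay⟩ := hf
  obtain ⟨v₀, hv₀⟩ := List.exists_mem_of_ne_nil C hne
  have hk : ∀ v, C.count v = C.count v₀ := fun v => by
    exact_mod_cast (mgHarmonic_count_of_mgPlay_eq hloop hplay).eq hsymm hconn v v₀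
  refine ⟨C.dedup, fun v => ?_, hC.dedup hsymm hloop hk⟩
  rw [List.count_dedup, if_pos (List.count_pos_iff.1 (hk v ▸ List.count_pos_iff.2 hv₀))]

end Rounds

section Apex

variable {m : V → V → ℕ}

omit [Fintype V] [DecidableEq V] in
lemma apexM_symm (hsymm : ∀ u v, m u v = m v u) (M : ℕ) :
    ∀ a b, apexM m M a b = apexM m M b a
  | some u, some v => hsymm u v
  | some _, none => rfl
  | none, some _ => rfl
  | none, none => rfl

omit [Fintype V] [DecidableEq V] in
lemma apexM_self (hloop : ∀ v, m v v = 0) (M : ℕ) : ∀ a, apexM m M a a = 0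
  | some v => hloop v
  | none => rfl

omit [DecidableEq V] in
lemma mgDeg_apexM_some (M : ℕ) (v : V) : mgDeg (apexM m M) (some v) = mgDeg m v + M := by
  simp [mgDeg, Fintype.sum_option, apexM, add_comm]

omit [DecidableEq V] in
lemma mgDeg_apexM_none (M : ℕ) : mgDeg (apexM m M) (none : Option V) = Fintype.card V * M := by
  simp [mgDeg, Fintype.sum_option, apexM]

lemma mgLegal_apexM_map_some {M : ℕ} {F : Option V → ℤ} {L : List V} (hL : L.Nodup)
    (h : mgLegal m (fun v => F (some v) - M) L) : mgLegal (apexM m M) F (L.map some) := by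
  induction L generalizing F with
  | nil => trivial
  | cons a L ih =>
    obtain ⟨haL, hL⟩ := List.nodup_cons.1 hL
    refine ⟨by rw [mgDeg_apexM_some]; push_cast; linarith [h.1],
      ih hL (h.2.mono fun u hu => ?_)⟩
    have hua : u ≠ a := fun h => haL (h ▸ hu)
    rw [mgFire_apply_of_ne _ _ hua, mgFire_apply_of_ne _ _ (Option.some_injective V |>.ne hua)]
    simp only [apexM]
    linarith

lemma mgRecurrent.apex (hsymm : ∀ u v, m u v = m v u) (hloop : ∀ v, m v v = 0)
    (hconn : mgConnected m) {f : V → ℤ} (hf : mgRecurrent m f) (M : ℕ) :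
    mgRecurrent (apexM m M) (apexF f M) := by
  obtain ⟨R, hR, hRleg⟩ := hf.exists_mgLegal_round hsymm hloop hconn
  -- `mgPlay_apply` counts with the `BEq` instance derived from `DecidableEq (Option V)`
  have hcount := @List.count_map_of_injective _ _ _ _ instBEqOfDecidableEq _ R some
    (Option.some_injective V)
  have hnone :=
    @List.count_eq_zero_of_not_mem _ instBEqOfDecidableEq _ none (R.map some) (by simp)
  refine ⟨R.map some ++ [none], by simp, ?_,
    mgPlay_eq_self_of_count_eq_one (apexM_symm hsymm M) (apexM_self hloop M) ?_⟩
  · rw [mgLegal_append]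
    refine ⟨mgLegal_apexM_map_some (List.nodup_iff_count_le_one.2 fun v => (hR v).le)
      (by simpa [apexF] using hRleg), ?_, trivial⟩
    rw [mgPlay_apply (apexM_self hloop M), mgDeg_apexM_none]
    simp [Fintype.sum_option, apexM, apexF, hcount, hR, hnone]
  · rintro (_ | v) <;> simp [List.count_append, hcount, hR, hnone]

end Apex

lemma mgDistRec_spec [Nonempty V] {m : V → V → ℕ} (hsymm : ∀ u v, m u v = m v u)
    (hloop : ∀ v, m v v = 0) (f : V → ℤ) :
    ∃ g, mgEffective g ∧ mgDegDiv g = mgDistRec m f ∧ mgRecurrent m (f + g) := by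
  set g : V → ℤ := fun v => max 0 ((mgDeg m v : ℤ) - f v)
  have hg : mgEffective g := fun v => le_max_left _ _
  have hrec : mgRecurrent m (f + g) := mgRecurrent_of_forall_mgDeg_le hsymm hloop fun v => by
    simp only [Pi.add_apply, g]
    linarith [le_max_right 0 ((mgDeg m v : ℤ) - f v)]
  exact Nat.sInf_mem (s := {n : ℕ | ∃ g : V → ℤ, mgEffective g ∧ mgDegDiv g = n ∧
    mgRecurrent m (f + g)})
    ⟨_, g, hg, (Int.toNat_of_nonneg (Finset.sum_nonneg fun v _ => hg v)).symm, hrec⟩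

lemma mgDistNonhalt_apex_le_mgDistRec [Nonempty V] {m : V → V → ℕ}
    (hsymm : ∀ u v, m u v = m v u) (hloop : ∀ v, m v v = 0) (hconn : mgConnected m)
    (f : V → ℤ) (M : ℕ) :
    mgDistNonhalt (apexM m M) (apexF f M) ≤ mgDistRec m f := by
  obtain ⟨g, hg, hdeg, hrec⟩ := mgDistRec_spec hsymm hloop f
  apply Nat.sInf_le
  refine ⟨fun o => o.elim 0 g, ?_, ?_, ?_⟩
  · rintro (_ | v)
    exacts [le_rfl, hg v]
  · simpa [mgDegDiv, Fintype.sum_option] using hdeg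
  · have : apexF f M + (fun o => o.elim 0 g) = apexF (f + g) M := by
      funext o
      cases o <;> simp [apexF]
      ring
    rw [this]
    exact (hrec.apex hsymm hloop hconn M).not_mgHalting

theorem stmt14_general [Nonempty V] (m : V → V → ℕ) (hsymm : ∀ u v, m u v = m v u)
    (hloop : ∀ v, m v v = 0) (hconn : mgConnected m) (f : V → ℤ) (M : ℕ)
    (hM : (mgDistRec m f : ℤ) +
        max 0 (Finset.univ.sup' Finset.univ_nonempty (fun v => f v - (mgDeg m v : ℤ)))
      < (M : ℤ)) :
    mgDistNonhalt (apexM m M) (apexF f M) < M := by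
  have hrec : (mgDistRec m f : ℤ) < M :=
    lt_of_le_of_lt (le_add_of_nonneg_right (le_max_left _ _)) hM
  exact (mgDistNonhalt_apex_le_mgDistRec hsymm hloop hconn f M).trans_lt (by exact_mod_cast hrec)

/-- `M > dist_nonhalt_{G'}(f')` for the apex construction. -/
theorem stmt14 [Nonempty V] (m : V → V → ℕ) (hsymm : ∀ u v, m u v = m v u)
    (hloop : ∀ v, m v v = 0) (hconn : mgConnected m) (f : V → ℤ) (M : ℕ)
    (hMpos : 0 < M)
    (hM : (mgDistRec m f : ℤ) +
        max 0 (Finset.univ.sup' Finset.univ_nonempty (fun v => f v - (mgDeg m v : ℤ)))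
      < (M : ℤ)) :
    mgDistNonhalt (apexM m M) (apexF f M) < M :=
  stmt14_general m hsymm hloop hconn f M hM
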